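/- arXiv:2310.08935 — 3 statements merged into one kernel-verified Lean document; each statement's English description precedes it below -/
import Mathlib

section
/- Let J ≥ 2 be an integer, γ ∈ (0,1), and q_A, q_B ∈ (0,1) with q_A ≠ q_B. Then the casino's asymptotic profit per coup under the random-mixture strategy, R_C = γ f(q_A) + (1−γ) f(q_B) − f(γ q_A + (1−γ) q_B), is strictly positive. -/
/-- `f(z) = J(1-z)z^J/(1-z^J)`. -/
noncomputable def futurityF (J : ℕ) (z : ℝ) : ℝ :=
  (J : ℝ) * (1 - z) * z ^ J / (1 - z ^ J)

/-!
`R_C > 0` is the strict convexity of `f` on `(0,1)`. Differentiating twice,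
`f''(z) = J² z^(J-2) G(z) / (1 - z^J)³` with `G(z) = (1-z)((J+1) + (J-1) z^J) - 2(1 - z^J)`,
and `G(z) / (1-z) = ∑_{k=0}^{J} (1 - z^k)(1 - z^(J-k))` is a sum of nonnegative terms whose
term `k = 1` is positive.
-/

open Finset Set

theorem strictConvexOn_of_hasDerivAt2_pos {D : Set ℝ} (hD : Convex ℝ D) (hDo : IsOpen D)
    {f f' f'' : ℝ → ℝ} (hf : ∀ x ∈ D, HasDerivAt f (f' x) x)
    (hf' : ∀ x ∈ D, HasDerivAt f' (f'' x) x) (hf'' : ∀ x ∈ D, 0 < f'' x) :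
    StrictConvexOn ℝ D f := by
  have hmono : StrictMonoOn f' D := strictMonoOn_of_hasDerivWithinAt_pos hD
    (fun x hx => (hf' x hx).continuousAt.continuousWithinAt)
    (by rw [hDo.interior_eq]; exact fun x hx => (hf' x hx).hasDerivWithinAt)
    (by rwa [hDo.interior_eq])
  refine StrictMonoOn.strictConvexOn_of_deriv hD
    (fun x hx => (hf x hx).continuousAt.continuousWithinAt) ?_
  rw [hDo.interior_eq]
  exact hmono.congr fun x hx => ((hf x hx).deriv).symm

theorem sum_range_one_sub_pow_mul_one_sub_pow (z : ℝ) (J : ℕ) :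
    ∑ k ∈ range (J + 1), (1 - z ^ k) * (1 - z ^ (J - k)) =
      (J + 1) + (J - 1) * z ^ J - 2 * ∑ k ∈ range J, z ^ k := by
  have hreflect : ∑ k ∈ range (J + 1), z ^ (J - k) = ∑ k ∈ range (J + 1), z ^ k := by
    simpa using sum_range_reflect (fun k => z ^ k) (J + 1)
  have hexpand : ∀ k ∈ range (J + 1), (1 - z ^ k) * (1 - z ^ (J - k)) =
      1 + z ^ J - z ^ k - z ^ (J - k) := fun k hk => by
    rw [← pow_mul_pow_sub z (mem_range_succ_iff.1 hk)]; ring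
  rw [sum_congr rfl hexpand, sum_sub_distrib, sum_sub_distrib, sum_add_distrib, hreflect,
    sum_range_succ (fun k => z ^ k)]
  simp only [sum_const, card_range, nsmul_eq_mul]
  push_cast
  ring

theorem two_mul_geom_sum_lt {z : ℝ} (hz₀ : 0 ≤ z) (hz₁ : z ≠ 1) {J : ℕ} (hJ : 2 ≤ J) :
    2 * ∑ k ∈ range J, z ^ k < (J + 1) + (J - 1) * z ^ J := by
  rw [← sub_pos, ← sum_range_one_sub_pow_mul_one_sub_pow]
  have hterm : ∀ a b : ℕ, (1 - z ^ a) * (1 - z ^ b) =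
      (1 - z) ^ 2 * ((∑ i ∈ range a, z ^ i) * ∑ i ∈ range b, z ^ i) := fun a b => by
    rw [← geom_sum_mul_neg, ← geom_sum_mul_neg]; ring
  refine sum_pos' (fun k _ => ?_) ⟨1, mem_range.2 (by omega), ?_⟩
  · rw [hterm]; positivity
  · rw [hterm]
    have hq : 0 < ∑ i ∈ range (J - 1), z ^ i :=
      sum_pos' (fun i _ => by positivity) ⟨0, mem_range.2 (by omega), by simp⟩
    have hsq : 0 < (1 - z) ^ 2 := pow_two_pos_of_ne_zero (sub_ne_zero.2 hz₁.symm)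
    simp only [Finset.range_one, sum_singleton, pow_zero, one_mul]
    positivity

theorem two_mul_one_sub_pow_lt {z : ℝ} (hz₀ : 0 ≤ z) (hz₁ : z < 1) {J : ℕ} (hJ : 2 ≤ J) :
    2 * (1 - z ^ J) < (1 - z) * ((J + 1) + (J - 1) * z ^ J) := by
  rw [← geom_sum_mul_neg, mul_comm _ (1 - z), mul_left_comm]
  exact mul_lt_mul_of_pos_left (two_mul_geom_sum_lt hz₀ hz₁.ne hJ) (sub_pos.2 hz₁)

noncomputable def futurityDeriv (J : ℕ) (z : ℝ) : ℝ :=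
  J * z ^ (J - 1) * (J - (J + 1) * z + z ^ (J + 1)) / (1 - z ^ J) ^ 2

theorem hasDerivAt_futurityF {J : ℕ} {z : ℝ} (hz : z ^ J ≠ 1) :
    HasDerivAt (futurityF J) (futurityDeriv J z) z := by
  obtain ⟨m, rfl⟩ : ∃ m, J = m + 1 := Nat.exists_eq_add_one.2 <| Nat.pos_of_ne_zero <| by
    rintro rfl; exact hz (pow_zero z)
  have hN := (((hasDerivAt_id' z).const_sub 1).const_mul ((m + 1 : ℕ) : ℝ)).fun_mul
    (hasDerivAt_pow (m + 1) z)
  have hD := (hasDerivAt_pow (m + 1) z).const_sub 1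
  refine (hN.fun_div hD (sub_ne_zero.2 hz.symm)).congr_deriv ?_
  simp only [futurityDeriv, Nat.add_sub_cancel]
  ring

theorem hasDerivAt_futurityDeriv {J : ℕ} (hJ : 2 ≤ J) {z : ℝ} (hz : z ^ J ≠ 1) :
    HasDerivAt (futurityDeriv J)
      (J ^ 2 * z ^ (J - 2) * ((1 - z) * ((J + 1) + (J - 1) * z ^ J) - 2 * (1 - z ^ J)) /
        (1 - z ^ J) ^ 3) z := by
  obtain ⟨m, rfl⟩ := Nat.exists_eq_add_of_le' hJ
  have hN := ((hasDerivAt_pow (m + 1) z).const_mul ((m + 2 : ℕ) : ℝ)).fun_mul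
    ((((hasDerivAt_id' z).const_mul (((m + 2 : ℕ) : ℝ) + 1)).const_sub ((m + 2 : ℕ) : ℝ)).fun_add
      (hasDerivAt_pow (m + 2 + 1) z))
  have hD := ((hasDerivAt_pow (m + 2) z).const_sub 1).fun_pow 2
  have hD0 : (1 - z ^ (m + 2)) ≠ 0 := sub_ne_zero.2 hz.symm
  refine (hN.fun_div hD (pow_ne_zero 2 hD0)).congr_deriv ?_
  simp only [Nat.add_sub_cancel]
  field_simp
  push_cast
  ring

theorem strictConvexOn_futurityF {J : ℕ} (hJ : 2 ≤ J) :
    StrictConvexOn ℝ (Ioo 0 1) (futurityF J) := by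
  have hpow : ∀ z ∈ Ioo (0 : ℝ) 1, z ^ J < 1 := fun z hz =>
    pow_lt_one₀ hz.1.le hz.2 (by omega)
  refine strictConvexOn_of_hasDerivAt2_pos (convex_Ioo 0 1) isOpen_Ioo
    (fun z hz => hasDerivAt_futurityF (hpow z hz).ne)
    (fun z hz => hasDerivAt_futurityDeriv hJ (hpow z hz).ne) fun z hz => ?_
  have hG := two_mul_one_sub_pow_lt hz.1.le hz.2 hJ
  have hJ₀ : (0 : ℝ) < J := Nat.cast_pos.2 (by omega)
  have hz₀ := hz.1
  have hD := sub_pos.2 (hpow z hz)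
  have hN := sub_pos.2 hG
  positivity

/-- For `J ≥ 2`, `γ ∈ (0,1)` and `q_A ≠ q_B` in `(0,1)`, the casino's asymptotic profit
per coup under the random-mixture strategy,
`R_C = γ f(q_A) + (1-γ) f(q_B) - f(γ q_A + (1-γ) q_B)`, is strictly positive. -/
theorem random_mixture_profit_pos (J : ℕ) (hJ : 2 ≤ J) (γ qA qB : ℝ)
    (hγ : γ ∈ Set.Ioo (0 : ℝ) 1) (hqA : qA ∈ Set.Ioo (0 : ℝ) 1)
    (hqB : qB ∈ Set.Ioo (0 : ℝ) 1) (hne : qA ≠ qB) :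
    0 < γ * futurityF J qA + (1 - γ) * futurityF J qB
        - futurityF J (γ * qA + (1 - γ) * qB) := by
  have h := (strictConvexOn_futurityF hJ).2 hqA hqB hne hγ.1 (sub_pos.2 hγ.2)
    (add_sub_cancel γ 1)
  simp only [smul_eq_mul] at h
  linarith
end

section
/- (Induction claim of Appendix B.) Let h, r, s ≥ 1, let r_k, s_k ≥ 1 (1 ≤ k ≤ h) with Σ_k r_k = r, Σ_k s_k = s, and for 1 ≤ l ≤ h define the strategy D_l = A^{r_1}B^{s_1}⋯A^{r_{l−1}}B^{s_{l−1}} A^{r_l+r_{l+1}+⋯+r_h} B^{s_l+s_{l+1}+⋯+s_h}, with block vector a(l) = (r_1, s_1, …, r_{l−1}, s_{l−1}, Σ_{m=l}^h r_m, Σ_{m=l}^h s_m) and associated b_i(l). Then R_{D_l} = 2 Q_l S, where Q_l = l + Σ_{m=1}^{2l} Σ_{j=1}^{2l−1} (−1)^j Π_{i=m}^{m+j−1} b_i(l) + l Π_{i=1}^{2l} b_i(l). -/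
open Finset

/-- `p°` for a single arm with win probability `x` (Futurity parameter `J = 2`):
`p° = x (1-x)² / (1 - (1-x)²)`. -/
noncomputable def poArm (x : ℝ) : ℝ := x * (1 - x) ^ 2 / (1 - (1 - x) ^ 2)

/-- `p°_D = (1/(r+s)) Σ_{k=1}^{r+s} (Σ_{j=1}^{r+s} p_j Π_{i=j+1}^{j+2k} q_i) / (1 − (q_A^r q_B^s)²)`. -/
noncomputable def pCircD (p : ℕ → ℝ) (r s : ℕ) (qA qB : ℝ) : ℝ :=
  (1 / ((r + s : ℕ) : ℝ)) *
    ∑ k ∈ Finset.Icc 1 (r + s),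
      (∑ j ∈ Finset.Icc 1 (r + s),
          p j * ∏ i ∈ Finset.Icc (j + 1) (j + 2 * k), (1 - p i)) /
        (1 - (qA ^ r * qB ^ s) ^ 2)

/-- The casino's asymptotic profit per coup `R_D = 2(r p°_A + s p°_B)/(r+s) − 2 p°_D`. -/
noncomputable def RD (p : ℕ → ℝ) (r s : ℕ) (pA pB : ℝ) : ℝ :=
  2 * ((r : ℝ) * poArm pA + (s : ℝ) * poArm pB) / ((r + s : ℕ) : ℝ)
    - 2 * pCircD p r s (1 - pA) (1 - pB)

/-- `S = (q_A − q_B)²(1 + (−1)^{r+s} q_A^r q_B^s) /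
      ((r+s)(1+q_A)²(1+q_B)²(1 − (q_A^r q_B^s)²))`. -/
noncomputable def Sval (qA qB : ℝ) (r s : ℕ) : ℝ :=
  (qA - qB) ^ 2 * (1 + (-1 : ℝ) ^ (r + s) * qA ^ r * qB ^ s) /
    (((r + s : ℕ) : ℝ) * (1 + qA) ^ 2 * (1 + qB) ^ 2 * (1 - (qA ^ r * qB ^ s) ^ 2))

/-!
Put `y_i = p_i - 1`, so that `1 - p_i = -y_i`, and `P = ∏_{i=1}^{r+s} y_i = (-1)^{r+s} q_A^r q_B^s`,
which is also the product of the `b_i(l)`. Pairing the terms `2k` and `2k + 1` of `p°_D`, and using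
that a full period contributes the factor `P`, the numerator of `p°_D` becomes
`(1 + P) ∑_j y_j S_j` with `S_j = ∑_{m=1}^{r+s} y_{j+1} ⋯ y_{j+m}`, a periodic solution of
`S_j = y_{j+1} (1 - P + S_{j+1})`. On a block where `y ≡ z` (so `z = p_A - 1` or `p_B - 1`) this
recurrence is geometric around its fixed point `(1 - P) γ`, `γ = z / (1 - z)`; at the block ends it
becomes `κ_t = (1 - P) γ_t (1 - b_t) + b_t κ_{t+1}`, whose periodic solution is explicit and, as
`P ≠ 1`, unique. Summing `y_j S_j` block by block, the letters alternate, and odd and even blocks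
contribute the same alternating sums of products of the `b_i`; this gives `-(γ_A - γ_B)² Q_l`, and
with `p°_A = z_A γ_A` the claim `R_{D_l} = 2 Q_l S` follows.
-/

namespace Function.Periodic

variable {M : Type*} [CommMonoid M] {f : ℕ → M} {n : ℕ}

@[to_additive]
theorem prod_range_shift (hf : Periodic f n) (m : ℕ) :
    ∏ i ∈ range n, f (m + i) = ∏ i ∈ range n, f i := by
  induction m with
  | zero => simp
  | succ m ih =>
    rw [← ih]
    rcases n with _ | n
    · simp
    rw [prod_range_succ, prod_range_succ', add_zero, show m + 1 + n = m + (n + 1) by omega, hf]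
    exact congrArg (· * f m) (prod_congr rfl fun k _ => congrArg f (by omega))

@[to_additive]
theorem prod_Icc_eq_prod_range (hf : Periodic f n) :
    ∏ i ∈ Icc 1 n, f i = ∏ i ∈ range n, f i := by
  rw [← Ico_add_one_right_eq_Icc, prod_Ico_eq_prod_range, Nat.add_sub_cancel,
    hf.prod_range_shift]

theorem two_mul_add {α : Type*} {g : ℕ → α} (hg : Periodic g 2) (k x : ℕ) :
    g (2 * k + x) = g x := by
  rw [add_comm, mul_comm]; exact hg.nat_mul k x

end Function.Periodic

namespace Finset

variable {M : Type*} [CommMonoid M]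

@[to_additive]
theorem prod_range_even_odd (f : ℕ → M) (n : ℕ) :
    ∏ i ∈ range (2 * n), f i = ∏ i ∈ range n, (f (2 * i) * f (2 * i + 1)) := by
  induction n with
  | zero => simp
  | succ n ih => rw [mul_add_one, prod_range_succ, prod_range_succ, ih, prod_range_succ, mul_assoc]

end Finset

@[to_additive]
theorem prod_pow_of_periodic_two {M : Type*} [CommMonoid M] {c : ℕ → M} {a : ℕ → ℕ}
    {l r s : ℕ} (hc : Function.Periodic c 2) (hodd : ∑ k ∈ range l, a (2 * k + 1) = r)
    (heven : ∑ k ∈ range l, a (2 * k + 2) = s) :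
    ∏ t ∈ range (2 * l), c (t + 1) ^ a (t + 1) = c 1 ^ r * c 2 ^ s := by
  simp only [prod_range_even_odd, add_assoc, hc.two_mul_add, prod_mul_distrib, prod_pow_eq_pow_sum]
  rw [← hodd, ← heven]

section SegProd

variable {M : Type*} [CommMonoid M] (f : ℕ → M)

def segProd (m k : ℕ) : M := ∏ i ∈ range k, f (m + i)

@[simp]
theorem segProd_zero (m : ℕ) : segProd f m 0 = 1 := prod_range_zero _

theorem segProd_succ (m k : ℕ) : segProd f m (k + 1) = segProd f m k * f (m + k) :=
  prod_range_succ _ k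

theorem segProd_succ' (m k : ℕ) : segProd f m (k + 1) = f m * segProd f (m + 1) k := by
  simp only [segProd, prod_range_succ', add_zero, mul_comm (f m), add_right_comm m, add_assoc m]

theorem segProd_add (m k l : ℕ) : segProd f m (k + l) = segProd f m k * segProd f (m + k) l := by
  simp only [segProd, prod_range_add, add_assoc]

theorem prod_Icc_eq_segProd (m l : ℕ) : ∏ i ∈ Icc m l, f i = segProd f m (l + 1 - m) := by
  rw [← Finset.Ico_add_one_right_eq_Icc, prod_Ico_eq_prod_range, segProd]

variable {f} {n : ℕ}

theorem segProd_add_period (hf : Function.Periodic f n) (m k : ℕ) :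
    segProd f (m + n) k = segProd f m k :=
  prod_congr rfl fun i _ => by rw [add_right_comm, hf]

theorem segProd_period (hf : Function.Periodic f n) (m : ℕ) :
    segProd f m n = ∏ i ∈ range n, f i :=
  hf.prod_range_shift m

end SegProd

section WindowSum

variable {y : ℕ → ℝ} {n : ℕ}

def windowSum (y : ℕ → ℝ) (n j : ℕ) : ℝ := ∑ m ∈ range n, segProd y (j + 1) (m + 1)

theorem windowSum_add_period (hy : Function.Periodic y n) (j : ℕ) :
    windowSum y n (j + n) = windowSum y n j := by
  simp only [windowSum, add_right_comm j n 1, segProd_add_period hy]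

theorem windowSum_eq (hy : Function.Periodic y n) (j : ℕ) :
    windowSum y n j = y (j + 1) * (1 - ∏ i ∈ range n, y i + windowSum y n (j + 1)) := by
  have hsum : ∑ m ∈ range (n + 1), segProd y (j + 1 + 1) m = 1 + windowSum y n (j + 1) := by
    rw [sum_range_succ', segProd_zero, add_comm]; rfl
  rw [sum_range_succ, segProd_period hy] at hsum
  have hfirst : windowSum y n j = y (j + 1) * ∑ m ∈ range n, segProd y (j + 1 + 1) m := by
    rw [windowSum, mul_sum]
    exact sum_congr rfl fun m _ => segProd_succ' y _ _
  rw [hfirst]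
  linear_combination y (j + 1) * hsum

theorem sum_segProd_add_period (hy : Function.Periodic y n) (M : ℕ) :
    ∑ j ∈ range n, segProd y j (M + n)
      = (∏ i ∈ range n, y i) * ∑ j ∈ range n, segProd y j M := by
  simp only [segProd_add, segProd_period hy, mul_sum, mul_comm]

theorem sum_Icc_one_add_mul_segProd (hy : Function.Periodic y n) (M : ℕ) :
    ∑ j ∈ Icc 1 n, (1 + y j) * segProd y (j + 1) M
      = ∑ j ∈ range n, segProd y j M + ∑ j ∈ range n, segProd y j (M + 1) := by
  have hper : Function.Periodic (fun j => (1 + y j) * segProd y (j + 1) M) n := fun j => by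
    simp only [add_right_comm j n 1, segProd_add_period hy, hy j]
  have hsplit : ∀ j,
      (1 + y j) * segProd y (j + 1) M = segProd y (1 + j) M + segProd y j (M + 1) := fun j => by
    rw [segProd_succ', add_comm 1 j]; ring
  rw [hper.sum_Icc_eq_sum_range]
  simp only [hsplit, sum_add_distrib]
  exact congrArg (· + _)
    (Function.Periodic.sum_range_shift (f := fun j => segProd y j M) (segProd_add_period hy · M) 1)

theorem sum_Icc_sum_Icc_one_add_mul_segProd (hy : Function.Periodic y n) :
    ∑ k ∈ Icc 1 n, ∑ j ∈ Icc 1 n, (1 + y j) * segProd y (j + 1) (2 * k)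
      = (1 + ∏ i ∈ range n, y i) * ∑ j ∈ Icc 1 n, y j * windowSum y n j := by
  set c : ℕ → ℝ := fun M => ∑ j ∈ range n, segProd y j M
  have hshift : ∀ m, c (n + m + 2) = (∏ i ∈ range n, y i) * c (m + 2) := fun m => by
    rw [show n + m + 2 = m + 2 + n by ring]; exact sum_segProd_add_period hy _
  have hc : ∀ m, c (m + 2) = ∑ j ∈ range n, y j * segProd y (j + 1) (m + 1) := fun m =>
    sum_congr rfl fun j _ => segProd_succ' y j (m + 1)
  have hper : Function.Periodic (fun j => y j * windowSum y n j) n := fun j => by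
    simp only [windowSum_add_period hy, hy j]
  calc ∑ k ∈ Icc 1 n, ∑ j ∈ Icc 1 n, (1 + y j) * segProd y (j + 1) (2 * k)
      = ∑ k ∈ range n, (c (2 * k + 2) + c (2 * k + 1 + 2)) := by
        simp only [sum_Icc_one_add_mul_segProd hy]
        rw [← Ico_add_one_right_eq_Icc, sum_Ico_eq_sum_range, Nat.add_sub_cancel]
        exact sum_congr rfl fun k _ => by rw [show 2 * (1 + k) = 2 * k + 2 by ring]
    _ = ∑ m ∈ range (n + n), c (m + 2) := by rw [← two_mul, sum_range_even_odd]
    _ = (1 + ∏ i ∈ range n, y i) * ∑ m ∈ range n, c (m + 2) := by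
        rw [sum_range_add, add_mul, one_mul, mul_sum]; simp only [hshift]
    _ = (1 + ∏ i ∈ range n, y i) * ∑ j ∈ Icc 1 n, y j * windowSum y n j := by
        rw [hper.sum_Icc_eq_sum_range]
        simp only [hc, windowSum, mul_sum]
        rw [sum_comm]

end WindowSum

section AffineRecurrence

variable {α β Y Z : ℕ → ℝ} {L : ℕ}

theorem sub_eq_segProd_mul_of_recurrence (hY : ∀ t < L, Y t = α t + β t * Y (t + 1))
    (hZ : ∀ t < L, Z t = α t + β t * Z (t + 1)) :
    ∀ d ≤ L, Y (L - d) - Z (L - d) = segProd β (L - d) d * (Y L - Z L) := by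
  intro d
  induction d with
  | zero => simp
  | succ d ih =>
    intro hd
    have hidx : L - (d + 1) + 1 = L - d := by omega
    rw [hY _ (by omega), hZ _ (by omega), segProd_succ', hidx, mul_assoc, ← ih (by omega)]
    rw [mul_sub]; abel

theorem eq_of_recurrence_of_closed (hY : ∀ t < L, Y t = α t + β t * Y (t + 1))
    (hZ : ∀ t < L, Z t = α t + β t * Z (t + 1)) (hY0 : Y 0 = Y L) (hZ0 : Z 0 = Z L)
    (hβ : ∏ t ∈ range L, β t ≠ 1) : ∀ t ≤ L, Y t = Z t := by
  have hdiff := sub_eq_segProd_mul_of_recurrence hY hZ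
  have hL : Y L = Z L := by
    have h0 := hdiff L le_rfl
    simp only [Nat.sub_self, hY0, hZ0, segProd, zero_add] at h0
    have : (1 - ∏ t ∈ range L, β t) * (Y L - Z L) = 0 := by linear_combination h0
    linarith [(mul_eq_zero.mp this).resolve_left (sub_ne_zero.mpr hβ.symm)]
  intro t ht
  have := hdiff (L - t) (by omega)
  rw [Nat.sub_sub_self ht, hL, sub_self, mul_zero] at this
  linarith

end AffineRecurrence

section ConstantBlock

variable {X : ℕ → ℝ} {z C : ℝ} {s k : ℕ}

theorem sub_eq_pow_mul_of_recurrence (hz : z ≠ 1)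
    (h : ∀ i < k, X (s + i) = z * (C + X (s + i + 1))) (d : ℕ) (hd : d ≤ k) :
    X (s + (k - d)) - C * (z / (1 - z)) = z ^ d * (X (s + k) - C * (z / (1 - z))) := by
  have hfix : C * (z / (1 - z)) = z * C + z * (C * (z / (1 - z))) := by
    field_simp [sub_ne_zero.mpr hz.symm]; ring
  have := sub_eq_segProd_mul_of_recurrence (Y := fun i => X (s + i))
    (Z := fun _ => C * (z / (1 - z))) (α := fun _ => z * C) (β := fun _ => z) (L := k)
    (fun i hi => by
      show X (s + i) = z * C + z * X (s + (i + 1)); rw [h i hi, ← add_assoc]; ring)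
    (fun _ _ => hfix) d hd
  simpa [segProd] using this

theorem recurrence_block_start (hz : z ≠ 1) (h : ∀ i < k, X (s + i) = z * (C + X (s + i + 1))) :
    X s = C * (z / (1 - z)) * (1 - z ^ k) + z ^ k * X (s + k) := by
  have := sub_eq_pow_mul_of_recurrence hz h k le_rfl
  rw [Nat.sub_self, add_zero] at this
  linear_combination this

theorem recurrence_block_sum (hz : z ≠ 1) (h : ∀ i < k, X (s + i) = z * (C + X (s + i + 1))) :
    ∑ i ∈ range k, z * X (s + i + 1)
      = k * z * C * (z / (1 - z))
        + z / (1 - z) * (1 - z ^ k) * (X (s + k) - C * (z / (1 - z))) := by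
  have hX : ∀ i ∈ range k, z * X (s + i + 1)
      = z * (C * (z / (1 - z))) + z ^ (k - 1 - i) * (z * (X (s + k) - C * (z / (1 - z)))) := by
    intro i hi
    have := sub_eq_pow_mul_of_recurrence hz h (k - 1 - i) (by omega)
    rw [show s + (k - (k - 1 - i)) = s + i + 1 by have := mem_range.mp hi; omega] at this
    linear_combination z * this
  rw [sum_congr rfl hX, sum_add_distrib, sum_const, card_range, nsmul_eq_mul, ← sum_mul,
    sum_range_reflect (fun i => z ^ i) k]
  have hgeom := mul_neg_geom_sum z k
  field_simp [sub_ne_zero.mpr hz.symm]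
  linear_combination (X (s + k) * (1 - z) - C * z) * z * hgeom

end ConstantBlock

section Blocks

/-- Blocks of lengths `a 1, a 2, …` tile the positions `1, 2, …`; block `t + 1` is
`Ioc (blockEnd a t) (blockEnd a (t + 1))`. -/
def blockEnd (a : ℕ → ℕ) (t : ℕ) : ℕ := ∑ k ∈ Icc 1 t, a k

variable (a : ℕ → ℕ)

@[simp]
theorem blockEnd_zero : blockEnd a 0 = 0 := by simp [blockEnd]

theorem blockEnd_succ (t : ℕ) : blockEnd a (t + 1) = blockEnd a t + a (t + 1) :=
  sum_Icc_succ_top (by omega) a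

theorem blockEnd_mono : Monotone (blockEnd a) :=
  monotone_nat_of_le_succ fun t => by rw [blockEnd_succ]; omega

@[to_additive]
theorem prod_Ioc_blockEnd {M : Type*} [CommMonoid M] (f : ℕ → M) (L : ℕ) :
    ∏ i ∈ Ioc 0 (blockEnd a L), f i
      = ∏ t ∈ range L, ∏ i ∈ range (a (t + 1)), f (blockEnd a t + i + 1) := by
  induction L with
  | zero => simp
  | succ L ih =>
    rw [prod_range_succ, ← ih, blockEnd_succ,
      ← prod_Ioc_consecutive f (Nat.zero_le _) (Nat.le_add_right _ _)]
    congr 1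
    rw [← Ico_add_one_add_one_eq_Ioc, prod_Ico_eq_prod_range,
      show blockEnd a L + a (L + 1) + 1 - (blockEnd a L + 1) = a (L + 1) by omega]
    exact prod_congr rfl fun i _ => congrArg f (by omega)

end Blocks

section BlockSolution

variable {γ b : ℕ → ℝ} {L : ℕ}

/-- The `L`-periodic solution of `κ t = (1 - ∏ b) γ t (1 - b t) + b t κ (t + 1)`. -/
def blockSolution (γ b : ℕ → ℝ) (L t : ℕ) : ℝ :=
  ∑ u ∈ range L, γ (t + u) * (1 - b (t + u)) * segProd b t u

theorem sum_one_sub_mul_segProd (b : ℕ → ℝ) (t L : ℕ) :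
    ∑ u ∈ range L, (1 - b (t + u)) * segProd b t u = 1 - segProd b t L := by
  have htel : ∀ u, (1 - b (t + u)) * segProd b t u = segProd b t u - segProd b t (u + 1) :=
    fun u => by rw [segProd_succ]; ring
  simp only [htel, sum_range_sub', segProd_zero]

theorem blockSolution_add_period (hγ : Function.Periodic γ L) (hb : Function.Periodic b L)
    (t : ℕ) : blockSolution γ b L (t + L) = blockSolution γ b L t := by
  simp only [blockSolution, add_right_comm t L, hγ _, hb _, segProd_add_period hb]

theorem blockSolution_eq (hγ : Function.Periodic γ L) (hb : Function.Periodic b L) (t : ℕ) :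
    blockSolution γ b L t
      = (1 - ∏ i ∈ range L, b i) * γ t * (1 - b t) + b t * blockSolution γ b L (t + 1) := by
  rcases L with _ | L
  · simp [blockSolution]
  have hwrap : t + 1 + L = t + (L + 1) := by omega
  have hprod : b t * segProd b (t + 1) L = ∏ i ∈ range (L + 1), b i := by
    rw [← segProd_succ', segProd_period hb]
  have hshift : ∀ u, γ (t + (u + 1)) * (1 - b (t + (u + 1))) * segProd b t (u + 1)
      = b t * (γ (t + 1 + u) * (1 - b (t + 1 + u)) * segProd b (t + 1) u) := fun u => by
    rw [segProd_succ', show t + (u + 1) = t + 1 + u by omega]; ring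
  rw [blockSolution, blockSolution, sum_range_succ', sum_range_succ, hwrap, hγ, hb, mul_add,
    ← hprod]
  simp only [hshift, ← mul_sum, add_zero, segProd_zero]
  ring

end BlockSolution

section BlockRecurrence

variable {L : ℕ} {a : ℕ → ℕ} {y z b X : ℕ → ℝ} {C : ℝ}

theorem recurrence_on_block
    (hy : ∀ t < L, ∀ i, blockEnd a t < i → i ≤ blockEnd a (t + 1) → y i = z (t + 1))
    (hX : ∀ j < blockEnd a L, X j = y (j + 1) * (C + X (j + 1))) {t : ℕ} (ht : t < L) :
    ∀ i < a (t + 1), X (blockEnd a t + i) = z (t + 1) * (C + X (blockEnd a t + i + 1)) := by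
  intro i hi
  have hend : blockEnd a (t + 1) ≤ blockEnd a L := blockEnd_mono a ht
  rw [blockEnd_succ] at hend
  rw [hX _ (by omega), hy t ht _ (by omega) (by rw [blockEnd_succ]; omega)]

theorem prod_range_eq_prod_blocks
    (hy : ∀ t < L, ∀ i, blockEnd a t < i → i ≤ blockEnd a (t + 1) → y i = z (t + 1))
    (hb : ∀ t < L, b (t + 1) = z (t + 1) ^ a (t + 1))
    (hyper : Function.Periodic y (blockEnd a L)) (hbper : Function.Periodic b L) :
    ∏ i ∈ range (blockEnd a L), y i = ∏ t ∈ range L, b t := by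
  have hblock : ∀ t ∈ range L,
      ∏ i ∈ range (a (t + 1)), y (blockEnd a t + i + 1) = b (1 + t) := by
    intro t ht
    have ht := mem_range.mp ht
    have hend := blockEnd_succ a t
    rw [add_comm 1 t, hb t ht]
    refine (prod_congr rfl fun i hi => ?_).trans (by rw [prod_const, card_range])
    exact hy t ht _ (by omega) (by have := mem_range.mp hi; omega)
  rw [← hyper.prod_Icc_eq_prod_range, show Icc 1 (blockEnd a L) = Ioc 0 (blockEnd a L) from rfl,
    prod_Ioc_blockEnd, prod_congr rfl hblock, hbper.prod_range_shift]

variable {γ : ℕ → ℝ}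

theorem eq_blockSolution_of_recurrence
    (hy : ∀ t < L, ∀ i, blockEnd a t < i → i ≤ blockEnd a (t + 1) → y i = z (t + 1))
    (hb : ∀ t < L, b (t + 1) = z (t + 1) ^ a (t + 1)) (hz : ∀ t, z t ≠ 1)
    (hγ : ∀ t, γ t = z t / (1 - z t)) (hzper : Function.Periodic z L)
    (hbper : Function.Periodic b L) (hP : ∏ t ∈ range L, b t ≠ 1)
    (hX : ∀ j < blockEnd a L, X j = y (j + 1) * (1 - ∏ t ∈ range L, b t + X (j + 1)))
    (hX0 : X 0 = X (blockEnd a L)) :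
    ∀ t ≤ L, X (blockEnd a t) = blockSolution γ b L (t + 1) := by
  have hγper : Function.Periodic γ L := fun t => by rw [hγ, hγ, hzper]
  refine eq_of_recurrence_of_closed
    (α := fun t => (1 - ∏ t ∈ range L, b t) * γ (t + 1) * (1 - b (t + 1)))
    (β := fun t => b (t + 1)) (fun t ht => ?_) (fun t _ => blockSolution_eq hγper hbper (t + 1))
    (by rw [blockEnd_zero, hX0]) ?_ ?_
  · rw [recurrence_block_start (hz (t + 1)) (recurrence_on_block hy hX ht), ← hγ, ← hb t ht,
      ← blockEnd_succ]
  · rw [zero_add, add_comm, blockSolution_add_period hγper hbper]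
  · simpa only [← hbper.prod_range_shift 1, add_comm 1] using hP

theorem sum_mul_eq_sum_blocks
    (hy : ∀ t < L, ∀ i, blockEnd a t < i → i ≤ blockEnd a (t + 1) → y i = z (t + 1))
    (hb : ∀ t < L, b (t + 1) = z (t + 1) ^ a (t + 1)) (hz : ∀ t, z t ≠ 1)
    (hγ : ∀ t, γ t = z t / (1 - z t)) (hzper : Function.Periodic z L)
    (hbper : Function.Periodic b L) (hP : ∏ t ∈ range L, b t ≠ 1)
    (hX : ∀ j < blockEnd a L, X j = y (j + 1) * (1 - ∏ t ∈ range L, b t + X (j + 1)))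
    (hX0 : X 0 = X (blockEnd a L)) :
    ∑ j ∈ Ioc 0 (blockEnd a L), y j * X j
      = ∑ t ∈ range L, (a (t + 1) * z (t + 1) * (1 - ∏ t ∈ range L, b t) * γ (t + 1)
          + γ (t + 1) * (1 - b (t + 1))
            * (blockSolution γ b L (t + 2) - (1 - ∏ t ∈ range L, b t) * γ (t + 1))) := by
  rw [sum_Ioc_blockEnd]
  refine sum_congr rfl fun t ht => ?_
  have ht := mem_range.mp ht
  have hyz : ∀ i ∈ range (a (t + 1)), y (blockEnd a t + i + 1) * X (blockEnd a t + i + 1)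
      = z (t + 1) * X (blockEnd a t + i + 1) := fun i hi => by
    have := blockEnd_succ a t
    rw [hy t ht _ (by omega) (by have := mem_range.mp hi; omega)]
  rw [sum_congr rfl hyz, recurrence_block_sum (hz (t + 1)) (recurrence_on_block hy hX ht), ← hγ,
    ← hb t ht, ← blockEnd_succ,
    eq_blockSolution_of_recurrence hy hb hz hγ hzper hbper hP hX hX0 (t + 1) ht]

end BlockRecurrence

section TwoLetters

variable {γ b : ℕ → ℝ} {l : ℕ}

/-- `∑_{j=1}^{2l} (-1)^j b m ⋯ b (m + j - 1)`, with the terms paired. -/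
def altSegSum (b : ℕ → ℝ) (l m : ℕ) : ℝ :=
  ∑ u ∈ range l, (segProd b m (2 * u + 2) - segProd b m (2 * u + 1))

/-- The even-`u` half of the telescoping sum `sum_one_sub_mul_segProd` with `L = 2 * l`. -/
def evenSegSum (b : ℕ → ℝ) (l t : ℕ) : ℝ :=
  ∑ u ∈ range l, (1 - b (t + 2 * u)) * segProd b t (2 * u)

theorem altSegSum_periodic (hb : Function.Periodic b (2 * l)) :
    Function.Periodic (altSegSum b l) (2 * l) := fun m => by
  simp only [altSegSum, segProd_add_period hb]

theorem blockSolution_sub_eq (hγ : Function.Periodic γ 2) (hb : Function.Periodic b (2 * l))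
    (t : ℕ) :
    blockSolution γ b (2 * l) (t + 1) - (1 - ∏ i ∈ range (2 * l), b i) * γ t
      = (γ (t + 1) - γ t) * evenSegSum b l (t + 1) := by
  rw [← segProd_period hb (t + 1), ← sum_one_sub_mul_segProd, blockSolution, sum_mul,
    ← sum_sub_distrib, sum_range_even_odd, evenSegSum, mul_sum]
  refine sum_congr rfl fun u _ => ?_
  rw [show t + 1 + 2 * u = 2 * u + (t + 1) by ring,
    show t + 1 + (2 * u + 1) = 2 * (u + 1) + t by ring, hγ.two_mul_add, hγ.two_mul_add]
  ring

theorem one_sub_mul_evenSegSum (hb : Function.Periodic b (2 * l)) (t : ℕ) :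
    (1 - b t) * evenSegSum b l (t + 1)
      = (1 - ∏ i ∈ range (2 * l), b i) + altSegSum b l t + altSegSum b l (t + 1) := by
  have hterm : ∀ u, (1 - b t) * ((1 - b (t + 1 + 2 * u)) * segProd b (t + 1) (2 * u))
      = (segProd b (t + 1) (2 * u) - segProd b (t + 1) (2 * (u + 1)))
        + (segProd b (t + 1) (2 * u + 2) - segProd b (t + 1) (2 * u + 1))
        + (segProd b t (2 * u + 2) - segProd b t (2 * u + 1)) := fun u => by
    rw [mul_add_one, segProd_succ' b t (2 * u + 1), segProd_succ' b t (2 * u),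
      segProd_succ b (t + 1) (2 * u + 1), segProd_succ b (t + 1) (2 * u)]
    ring
  have htel := sum_range_sub' (fun u => segProd b (t + 1) (2 * u)) l
  simp only [segProd_zero, mul_zero] at htel
  rw [evenSegSum, mul_sum, sum_congr rfl fun u _ => hterm u, sum_add_distrib, sum_add_distrib,
    htel, segProd_period hb, altSegSum, altSegSum]
  ring

theorem sum_one_sub_mul_evenSegSum (hb : Function.Periodic b (2 * l)) (o : ℕ) :
    ∑ k ∈ range l, (1 - b (2 * k + o)) * evenSegSum b l (2 * k + o + 1)
      = l * (1 - ∏ i ∈ range (2 * l), b i) + ∑ m ∈ range (2 * l), altSegSum b l m := by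
  rw [sum_congr rfl fun k _ => one_sub_mul_evenSegSum hb (2 * k + o)]
  simp only [sum_add_distrib, sum_const, card_range, nsmul_eq_mul]
  rw [add_assoc, ← sum_add_distrib, ← (altSegSum_periodic hb).sum_range_shift o,
    sum_range_even_odd]
  exact congrArg _ (sum_congr rfl fun k _ => by rw [add_comm o, add_comm o, add_right_comm])

theorem sum_blockSolution_sub_eq (hγ : Function.Periodic γ 2) (hb : Function.Periodic b (2 * l)) :
    ∑ t ∈ range (2 * l), γ (t + 1) * (1 - b (t + 1))
        * (blockSolution γ b (2 * l) (t + 2) - (1 - ∏ i ∈ range (2 * l), b i) * γ (t + 1))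
      = -(γ 1 - γ 2) ^ 2
          * (l * (1 - ∏ i ∈ range (2 * l), b i)
            + ∑ m ∈ range (2 * l), altSegSum b l m) := by
  have hodd := sum_one_sub_mul_evenSegSum hb 1
  have heven := sum_one_sub_mul_evenSegSum hb 2
  simp only [blockSolution_sub_eq hγ hb]
  rw [sum_range_even_odd]
  simp only [add_assoc, Nat.reduceAdd, hγ.two_mul_add, show γ 3 = γ 1 from hγ 1]
    at hodd heven ⊢
  calc _ = γ 1 * (γ 2 - γ 1)
          * ∑ k ∈ range l, (1 - b (2 * k + 1)) * evenSegSum b l (2 * k + 2)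
        + γ 2 * (γ 1 - γ 2)
          * ∑ k ∈ range l, (1 - b (2 * k + 2)) * evenSegSum b l (2 * k + 3) := by
        rw [mul_sum, mul_sum, ← sum_add_distrib]
        exact sum_congr rfl fun k _ => by ring
    _ = _ := by rw [hodd, heven]; ring

theorem sum_Icc_neg_one_pow_mul_prod_Icc (hl : 1 ≤ l) (m : ℕ) :
    ∑ j ∈ Icc 1 (2 * l - 1), (-1 : ℝ) ^ j * ∏ i ∈ Icc m (m + j - 1), b i
      = altSegSum b l m - segProd b m (2 * l) := by
  have hterm : ∀ j ∈ Icc 1 (2 * l), (-1 : ℝ) ^ j * ∏ i ∈ Icc m (m + j - 1), b i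
      = (-1) ^ j * segProd b m j := fun j hj => by
    rw [prod_Icc_eq_segProd, show m + j - 1 + 1 - m = j by have := (mem_Icc.mp hj).1; omega]
  have hfull : ∑ j ∈ Icc 1 (2 * l), (-1 : ℝ) ^ j * segProd b m j = altSegSum b l m := by
    rw [← Ico_add_one_right_eq_Icc, sum_Ico_eq_sum_range, Nat.add_sub_cancel, sum_range_even_odd]
    refine sum_congr rfl fun u _ => ?_
    rw [show 1 + 2 * u = 2 * u + 1 by ring, show 1 + (2 * u + 1) = 2 * u + 2 by ring]
    simp only [pow_succ, pow_mul]
    ring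
  have hsplit : ∑ j ∈ Icc 1 (2 * l), (-1 : ℝ) ^ j * ∏ i ∈ Icc m (m + j - 1), b i
      = ∑ j ∈ Icc 1 (2 * l - 1), (-1 : ℝ) ^ j * ∏ i ∈ Icc m (m + j - 1), b i
        + (-1) ^ (2 * l) * ∏ i ∈ Icc m (m + 2 * l - 1), b i := by
    conv_lhs => rw [show 2 * l = 2 * l - 1 + 1 by omega]
    rw [sum_Icc_succ_top (by omega), show 2 * l - 1 + 1 = 2 * l by omega]
  rw [sum_congr rfl hterm, hfull, hterm _ (by simp; omega), (even_two_mul l).neg_one_pow,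
    one_mul] at hsplit
  linarith

theorem sum_Icc_sum_Icc_neg_one_pow_mul_prod_Icc (hl : 1 ≤ l) (hb : Function.Periodic b (2 * l)) :
    ∑ m ∈ Icc 1 (2 * l), ∑ j ∈ Icc 1 (2 * l - 1),
        (-1 : ℝ) ^ j * ∏ i ∈ Icc m (m + j - 1), b i
      = ∑ m ∈ range (2 * l), altSegSum b l m - 2 * l * ∏ i ∈ range (2 * l), b i := by
  simp only [sum_Icc_neg_one_pow_mul_prod_Icc hl, segProd_period hb, sum_sub_distrib,
    (altSegSum_periodic hb).sum_Icc_eq_sum_range, sum_const, Nat.card_Icc, nsmul_eq_mul]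
  push_cast
  ring

end TwoLetters

section TwoLetterBlocks

variable {l n r s : ℕ} {a : ℕ → ℕ} {y z γ b : ℕ → ℝ}

theorem sum_mul_windowSum_eq (hyper : Function.Periodic y n)
    (hy : ∀ t < 2 * l, ∀ i, blockEnd a t < i → i ≤ blockEnd a (t + 1) → y i = z (t + 1))
    (hb : ∀ t < 2 * l, b (t + 1) = z (t + 1) ^ a (t + 1)) (hz : ∀ t, z t ≠ 1)
    (hγ : ∀ t, γ t = z t / (1 - z t)) (hzper : Function.Periodic z 2)
    (hbper : Function.Periodic b (2 * l)) (hP : ∏ t ∈ range (2 * l), b t ≠ 1)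
    (hend : blockEnd a (2 * l) = n) (hodd : ∑ k ∈ range l, a (2 * k + 1) = r)
    (heven : ∑ k ∈ range l, a (2 * k + 2) = s) :
    ∑ j ∈ Icc 1 n, y j * windowSum y n j
      = (1 - ∏ t ∈ range (2 * l), b t) * (r * (z 1 * γ 1) + s * (z 2 * γ 2))
        - (γ 1 - γ 2) ^ 2
          * (l * (1 - ∏ t ∈ range (2 * l), b t)
            + ∑ m ∈ range (2 * l), altSegSum b l m) := by
  subst hend
  have hγper : Function.Periodic γ 2 := fun t => by rw [hγ, hγ, hzper]
  have hzper' : Function.Periodic z (2 * l) := by rw [mul_comm]; exact hzper.nat_mul l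
  have hPy := prod_range_eq_prod_blocks hy hb hyper hbper
  have hX : ∀ j < blockEnd a (2 * l), windowSum y (blockEnd a (2 * l)) j
      = y (j + 1) * (1 - ∏ t ∈ range (2 * l), b t + windowSum y (blockEnd a (2 * l)) (j + 1)) :=
    fun j _ => by rw [windowSum_eq hyper, hPy]
  have hX0 := windowSum_add_period hyper 0
  rw [zero_add] at hX0
  rw [show Icc 1 (blockEnd a (2 * l)) = Ioc 0 (blockEnd a (2 * l)) from rfl,
    sum_mul_eq_sum_blocks hy hb hz hγ hzper' hbper hP hX hX0.symm, sum_add_distrib,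
    sum_blockSolution_sub_eq hγper hbper]
  have hzγ := sum_nsmul_of_periodic_two (c := fun t => z t * γ t)
    (fun t => by simp only [hzper t, hγper t]) hodd heven
  simp only [nsmul_eq_mul] at hzγ
  have hterm : ∀ t ∈ range (2 * l),
      (a (t + 1) : ℝ) * z (t + 1) * (1 - ∏ t ∈ range (2 * l), b t) * γ (t + 1)
        = (1 - ∏ t ∈ range (2 * l), b t) * (a (t + 1) * (z (t + 1) * γ (t + 1))) :=
    fun _ _ => by ring
  rw [← hzγ, mul_sum, sum_congr rfl hterm]
  ring

end TwoLetterBlocks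

theorem sum_range_eq_sum_Icc_of_tail {f g : ℕ → ℕ} {l h : ℕ} (hl1 : 1 ≤ l) (hl2 : l ≤ h)
    (hfg : ∀ j, 1 ≤ j → j ≤ l - 1 → f j = g j) (hlast : f l = ∑ m ∈ Icc l h, g m) :
    ∑ k ∈ range l, f (k + 1) = ∑ k ∈ Icc 1 h, g k := by
  obtain ⟨l, rfl⟩ : ∃ l', l = l' + 1 := ⟨l - 1, by omega⟩
  have hIcc : ∀ m, Icc (m + 1) h = Ioc m h := fun m => by
    rw [← Ico_add_one_right_eq_Icc, Ico_add_one_add_one_eq_Ioc]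
  have hhead : ∑ k ∈ range l, g (k + 1) = ∑ k ∈ Ioc 0 l, g k := by
    rw [← Ico_add_one_add_one_eq_Ioc, sum_Ico_eq_sum_range]
    simp only [zero_add, Nat.add_sub_cancel, add_comm 1]
  rw [sum_range_succ, hlast, sum_congr rfl fun k hk => hfg (k + 1) (by omega)
    (by have := mem_range.mp hk; omega), hhead, hIcc, show Icc 1 h = Ioc 0 h from hIcc 0,
    sum_Ioc_consecutive _ (Nat.zero_le l) (by omega)]

theorem poArm_one_sub {q : ℝ} (h1 : q ≠ 1) (h2 : 1 + q ≠ 0) :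
    poArm (1 - q) = q ^ 2 / (1 + q) := by
  have h1' : 1 - q ≠ 0 := sub_ne_zero.mpr h1.symm
  rw [poArm, sub_sub_cancel, show 1 - q ^ 2 = (1 - q) * (1 + q) by ring]
  field_simp

theorem pCircD_eq {p : ℕ → ℝ} {r s : ℕ} (hp : Function.Periodic p (r + s)) (qA qB : ℝ) :
    pCircD p r s qA qB
      = (1 + ∏ i ∈ range (r + s), (p i - 1))
          * (∑ j ∈ Icc 1 (r + s), (p j - 1) * windowSum (fun i => p i - 1) (r + s) j)
          / ((r + s : ℕ) * (1 - (qA ^ r * qB ^ s) ^ 2)) := by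
  have hy : Function.Periodic (fun i => p i - 1) (r + s) := fun i => by simp only [hp i]
  have hterm : ∀ j k, p j * ∏ i ∈ Icc (j + 1) (j + 2 * k), (1 - p i)
      = (1 + (p j - 1)) * segProd (fun i => p i - 1) (j + 1) (2 * k) := fun j k => by
    rw [add_sub_cancel, prod_Icc_eq_segProd, show j + 2 * k + 1 - (j + 1) = 2 * k by omega]
    simp only [segProd, ← neg_sub (p _) 1, prod_neg, card_range, (even_two_mul k).neg_one_pow,
      one_mul]
  simp only [pCircD, hterm, ← sum_div]
  rw [sum_Icc_sum_Icc_one_add_mul_segProd hy, one_div_mul_eq_div, div_div, mul_comm (_ - _)]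

theorem blockEnd_two_mul {a : ℕ → ℕ} {l : ℕ} :
    blockEnd a (2 * l) = ∑ k ∈ range l, a (2 * k + 1) + ∑ k ∈ range l, a (2 * k + 2) := by
  rw [blockEnd, ← Ico_add_one_right_eq_Icc, sum_Ico_eq_sum_range, Nat.add_sub_cancel,
    sum_range_even_odd, sum_add_distrib]
  exact congrArg₂ _ (sum_congr rfl fun k _ => congrArg a (by ring))
    (sum_congr rfl fun k _ => congrArg a (by ring))

theorem eq_pow_of_alternating {b : ℕ → ℝ} {a : ℕ → ℕ} {u v : ℝ} {l : ℕ}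
    (h : ∀ j, 1 ≤ j → j ≤ l →
      b (2 * j - 1) = (-1) ^ a (2 * j - 1) * u ^ a (2 * j - 1) ∧
        b (2 * j) = (-1) ^ a (2 * j) * v ^ a (2 * j)) :
    ∀ t < 2 * l, b (t + 1) = (if (t + 1) % 2 = 1 then -u else -v) ^ a (t + 1) := by
  intro t ht
  rcases Nat.even_or_odd' (t + 1) with ⟨j, hj | hj⟩
  · have := (h j (by omega) (by omega)).2
    rw [← hj] at this
    rw [this, if_neg (by omega), neg_pow v]
  · have := (h (j + 1) (by omega) (by omega)).1
    rw [show 2 * (j + 1) - 1 = t + 1 by omega] at this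
    rw [this, if_pos (by omega), neg_pow u]

theorem prod_eq_of_two_letter_blocks {b : ℕ → ℝ} {a : ℕ → ℕ} {qA qB : ℝ} {l r s : ℕ}
    (hodd : ∑ k ∈ range l, a (2 * k + 1) = r) (heven : ∑ k ∈ range l, a (2 * k + 2) = s)
    (hbper : Function.Periodic b (2 * l))
    (hb : ∀ t < 2 * l, b (t + 1) = (if (t + 1) % 2 = 1 then -qA else -qB) ^ a (t + 1)) :
    ∏ t ∈ range (2 * l), b t = (-1) ^ (r + s) * qA ^ r * qB ^ s := by
  have hc : Function.Periodic (fun t => if t % 2 = 1 then -qA else -qB) 2 := fun t => by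
    simp only [Nat.add_mod_right]
  calc ∏ t ∈ range (2 * l), b t = ∏ t ∈ range (2 * l), b (1 + t) :=
        (hbper.prod_range_shift 1).symm
    _ = ∏ t ∈ range (2 * l), (fun t => if t % 2 = 1 then -qA else -qB) (t + 1) ^ a (t + 1) :=
      prod_congr rfl fun t ht => by rw [add_comm, hb t (mem_range.mp ht)]
    _ = (-qA) ^ r * (-qB) ^ s := by rw [prod_pow_of_periodic_two hc hodd heven]; simp
    _ = (-1) ^ (r + s) * qA ^ r * qB ^ s := by rw [neg_pow qA, neg_pow qB, pow_add]; ring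

theorem pCircD_eq_of_two_letter_blocks {p b : ℕ → ℝ} {a : ℕ → ℕ} {qA qB : ℝ}
    {l r s : ℕ}
    (hqA : qA ∈ Set.Ioo (0 : ℝ) 1) (hqB : qB ∈ Set.Ioo (0 : ℝ) 1)
    (hodd : ∑ k ∈ range l, a (2 * k + 1) = r) (heven : ∑ k ∈ range l, a (2 * k + 2) = s)
    (hper : Function.Periodic p (r + s))
    (hp : ∀ t < 2 * l, ∀ i, blockEnd a t < i → i ≤ blockEnd a (t + 1) →
      p i = if (t + 1) % 2 = 1 then 1 - qA else 1 - qB)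
    (hbper : Function.Periodic b (2 * l))
    (hb : ∀ t < 2 * l, b (t + 1) = (if (t + 1) % 2 = 1 then -qA else -qB) ^ a (t + 1))
    (hP : ∏ t ∈ range (2 * l), b t ≠ 1) :
    pCircD p r s qA qB
      = (1 + ∏ t ∈ range (2 * l), b t)
          * ((1 - ∏ t ∈ range (2 * l), b t)
              * (r * (qA ^ 2 / (1 + qA)) + s * (qB ^ 2 / (1 + qB)))
            - (qA / (1 + qA) - qB / (1 + qB)) ^ 2
              * (l * (1 - ∏ t ∈ range (2 * l), b t) + ∑ m ∈ range (2 * l), altSegSum b l m))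
          / ((r + s : ℕ) * (1 - (qA ^ r * qB ^ s) ^ 2)) := by
  set z : ℕ → ℝ := fun t => if t % 2 = 1 then -qA else -qB with hz
  have hzper : Function.Periodic z 2 := fun t => by simp only [hz, Nat.add_mod_right]
  have hz1 : ∀ t, z t ≠ 1 := fun t => by
    simp only [hz]; split_ifs <;> linarith [hqA.1, hqB.1]
  have hend : blockEnd a (2 * l) = r + s := by rw [blockEnd_two_mul, hodd, heven]
  have hy : ∀ t < 2 * l, ∀ i, blockEnd a t < i → i ≤ blockEnd a (t + 1) →
      p i - 1 = z (t + 1) := by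
    intro t ht i h1 h2
    rw [hp t ht i h1 h2]
    simp only [hz]
    split_ifs <;> ring
  have hyper : Function.Periodic (fun i => p i - 1) (r + s) := fun i => by simp only [hper i]
  have hPy : ∏ i ∈ range (r + s), (p i - 1) = ∏ t ∈ range (2 * l), b t := by
    rw [← hend]; exact prod_range_eq_prod_blocks hy hb (hend ▸ hyper) hbper
  rw [pCircD_eq hper, hPy, sum_mul_windowSum_eq (γ := fun t => z t / (1 - z t)) hyper hy hb hz1
    (fun _ => rfl) hzper hbper hP hend hodd heven, show z 1 = -qA by simp [hz],
    show z 2 = -qB by simp [hz]]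
  ring

theorem RD_eq_of_two_letter_blocks {p b : ℕ → ℝ} {a : ℕ → ℕ} {qA qB : ℝ} {l r s : ℕ}
    (hqA : qA ∈ Set.Ioo (0 : ℝ) 1) (hqB : qB ∈ Set.Ioo (0 : ℝ) 1) (hr : 1 ≤ r)
    (hodd : ∑ k ∈ range l, a (2 * k + 1) = r) (heven : ∑ k ∈ range l, a (2 * k + 2) = s)
    (hper : Function.Periodic p (r + s))
    (hp : ∀ t < 2 * l, ∀ i, blockEnd a t < i → i ≤ blockEnd a (t + 1) →
      p i = if (t + 1) % 2 = 1 then 1 - qA else 1 - qB)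
    (hbper : Function.Periodic b (2 * l))
    (hb : ∀ t < 2 * l, b (t + 1) = (if (t + 1) % 2 = 1 then -qA else -qB) ^ a (t + 1)) :
    RD p r s (1 - qA) (1 - qB)
      = 2 * (l * (1 - ∏ t ∈ range (2 * l), b t) + ∑ m ∈ range (2 * l), altSegSum b l m)
        * Sval qA qB r s := by
  obtain ⟨hqA0, hqA1⟩ := hqA
  obtain ⟨hqB0, hqB1⟩ := hqB
  have hsign := prod_eq_of_two_letter_blocks hodd heven hbper hb
  set P := ∏ t ∈ range (2 * l), b t with hPdef
  have hPsq : (qA ^ r * qB ^ s) ^ 2 = P ^ 2 := by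
    rw [hsign, mul_assoc, mul_pow _ (qA ^ r * qB ^ s), ← pow_mul (-1 : ℝ),
      Even.neg_one_pow ⟨r + s, by ring⟩, one_mul]
  have hQ1 : qA ^ r * qB ^ s < 1 :=
    mul_lt_one_of_nonneg_of_lt_one_left (by positivity) (pow_lt_one₀ hqA0.le hqA1 (by omega))
      (pow_le_one₀ hqB0.le hqB1.le)
  have hP2 : P ^ 2 < 1 := hPsq ▸ pow_lt_one₀ (by positivity) hQ1 two_ne_zero
  have hP1 : P ≠ 1 := fun h1 => by rw [h1] at hP2; norm_num at hP2
  have hA : 1 + qA ≠ 0 := by linarith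
  have hB : 1 + qB ≠ 0 := by linarith
  rw [RD, sub_sub_cancel, sub_sub_cancel, pCircD_eq_of_two_letter_blocks ⟨hqA0, hqA1⟩
    ⟨hqB0, hqB1⟩ hodd heven hper hp hbper hb hP1, poArm_one_sub hqA1.ne hA,
    poArm_one_sub hqB1.ne hB, Sval, ← hsign, hPsq, ← hPdef]
  have hn : ((r + s : ℕ) : ℝ) ≠ 0 := by positivity
  have hP2' : 1 - P ^ 2 ≠ 0 := by linarith
  generalize ∑ m ∈ range (2 * l), altSegSum b l m = S
  field_simp
  ring

theorem appendixB_induction_claim_general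
    (pA pB qA qB : ℝ) (hpA : pA ∈ Set.Ioo (0 : ℝ) 1) (hpB : pB ∈ Set.Ioo (0 : ℝ) 1)
    (hqA : qA = 1 - pA) (hqB : qB = 1 - pB)
    (h r s : ℕ) (hr : 1 ≤ r)
    (rk sk : ℕ → ℕ)
    (hrsum : ∑ k ∈ Finset.Icc 1 h, rk k = r) (hssum : ∑ k ∈ Finset.Icc 1 h, sk k = s)
    (l : ℕ) (hl1 : 1 ≤ l) (hl2 : l ≤ h)
    -- block vector a(l) of the strategy D_l
    (al : ℕ → ℕ)
    (hal : ∀ j, 1 ≤ j → j ≤ l - 1 → al (2 * j - 1) = rk j ∧ al (2 * j) = sk j)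
    (halr : al (2 * l - 1) = ∑ m ∈ Finset.Icc l h, rk m)
    (hals : al (2 * l) = ∑ m ∈ Finset.Icc l h, sk m)
    -- the strategy D_l
    (p : ℕ → ℝ)
    (hper : ∀ i, p (i + (r + s)) = p i)
    (hblocks : ∀ t, 1 ≤ t → t ≤ 2 * l → ∀ i,
        (∑ k ∈ Finset.Icc 1 (t - 1), al k) < i → i ≤ ∑ k ∈ Finset.Icc 1 t, al k →
        p i = if t % 2 = 1 then pA else pB)
    -- the numbers b_i(l)
    (bl : ℕ → ℝ)
    (hblper : ∀ i, bl (i + 2 * l) = bl i)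
    (hbl : ∀ j, 1 ≤ j → j ≤ l →
        bl (2 * j - 1) = (-1 : ℝ) ^ al (2 * j - 1) * qA ^ al (2 * j - 1) ∧
        bl (2 * j) = (-1 : ℝ) ^ al (2 * j) * qB ^ al (2 * j)) :
    RD p r s pA pB
      = 2 * ((l : ℝ)
            + (∑ m ∈ Finset.Icc 1 (2 * l), ∑ j ∈ Finset.Icc 1 (2 * l - 1),
                (-1 : ℝ) ^ j * ∏ i ∈ Finset.Icc m (m + j - 1), bl i)
            + (l : ℝ) * ∏ i ∈ Finset.Icc 1 (2 * l), bl i)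
          * Sval qA qB r s := by
  obtain rfl : pA = 1 - qA := by rw [hqA]; ring
  obtain rfl : pB = 1 - qB := by rw [hqB]; ring
  have hodd : ∑ k ∈ range l, al (2 * k + 1) = r := by
    rw [← hrsum, ← sum_range_eq_sum_Icc_of_tail (f := fun j => al (2 * j - 1)) hl1 hl2
      (fun j h1 h2 => (hal j h1 h2).1) halr]
    exact sum_congr rfl fun k _ => congrArg al (by omega)
  have heven : ∑ k ∈ range l, al (2 * k + 2) = s := by
    rw [← hssum, ← sum_range_eq_sum_Icc_of_tail (f := fun j => al (2 * j)) hl1 hl2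
      (fun j h1 h2 => (hal j h1 h2).2) hals]
    exact sum_congr rfl fun k _ => congrArg al (by omega)
  rw [RD_eq_of_two_letter_blocks ⟨by linarith [hpA.2], by linarith [hpA.1]⟩
      ⟨by linarith [hpB.2], by linarith [hpB.1]⟩ hr hodd heven hper
      (fun t _ i h1 h2 => hblocks (t + 1) (by omega) (by omega) i (by rwa [Nat.add_sub_cancel]) h2)
      hblper (eq_pow_of_alternating hbl),
    sum_Icc_sum_Icc_neg_one_pow_mul_prod_Icc hl1 hblper,
    Function.Periodic.prod_Icc_eq_prod_range hblper]
  ring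

/-- Induction claim of Appendix B: for `1 ≤ l ≤ h` and the strategy
`D_l = A^{r_1}B^{s_1}⋯A^{r_{l−1}}B^{s_{l−1}} A^{r_l+⋯+r_h} B^{s_l+⋯+s_h}`
with block vector `a(l) = (r_1, s_1, …, r_{l−1}, s_{l−1}, Σ_{m=l}^h r_m, Σ_{m=l}^h s_m)`
and associated `b_i(l)` (period `2l`), one has `R_{D_l} = 2 Q_l S` with
`Q_l = l + Σ_{m=1}^{2l} Σ_{j=1}^{2l−1} (−1)^j Π_{i=m}^{m+j−1} b_i(l) + l Π_{i=1}^{2l} b_i(l)`. -/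
theorem appendixB_induction_claim
    (pA pB qA qB : ℝ) (hpA : pA ∈ Set.Ioo (0 : ℝ) 1) (hpB : pB ∈ Set.Ioo (0 : ℝ) 1)
    (hqA : qA = 1 - pA) (hqB : qB = 1 - pB)
    (h r s : ℕ) (hh : 1 ≤ h) (hr : 1 ≤ r) (hs : 1 ≤ s)
    (rk sk : ℕ → ℕ)
    (hrk : ∀ k, 1 ≤ k → k ≤ h → 1 ≤ rk k) (hsk : ∀ k, 1 ≤ k → k ≤ h → 1 ≤ sk k)
    (hrsum : ∑ k ∈ Finset.Icc 1 h, rk k = r) (hssum : ∑ k ∈ Finset.Icc 1 h, sk k = s)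
    (l : ℕ) (hl1 : 1 ≤ l) (hl2 : l ≤ h)
    -- block vector a(l) of the strategy D_l
    (al : ℕ → ℕ)
    (hal : ∀ j, 1 ≤ j → j ≤ l - 1 → al (2 * j - 1) = rk j ∧ al (2 * j) = sk j)
    (halr : al (2 * l - 1) = ∑ m ∈ Finset.Icc l h, rk m)
    (hals : al (2 * l) = ∑ m ∈ Finset.Icc l h, sk m)
    -- the strategy D_l
    (p : ℕ → ℝ)
    (hper : ∀ i, p (i + (r + s)) = p i)
    (hblocks : ∀ t, 1 ≤ t → t ≤ 2 * l → ∀ i,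
        (∑ k ∈ Finset.Icc 1 (t - 1), al k) < i → i ≤ ∑ k ∈ Finset.Icc 1 t, al k →
        p i = if t % 2 = 1 then pA else pB)
    -- the numbers b_i(l)
    (bl : ℕ → ℝ)
    (hblper : ∀ i, bl (i + 2 * l) = bl i)
    (hbl : ∀ j, 1 ≤ j → j ≤ l →
        bl (2 * j - 1) = (-1 : ℝ) ^ al (2 * j - 1) * qA ^ al (2 * j - 1) ∧
        bl (2 * j) = (-1 : ℝ) ^ al (2 * j) * qB ^ al (2 * j)) :
    RD p r s pA pB
      = 2 * ((l : ℝ)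
            + (∑ m ∈ Finset.Icc 1 (2 * l), ∑ j ∈ Finset.Icc 1 (2 * l - 1),
                (-1 : ℝ) ^ j * ∏ i ∈ Finset.Icc m (m + j - 1), bl i)
            + (l : ℝ) * ∏ i ∈ Finset.Icc 1 (2 * l), bl i)
          * Sval qA qB r s :=
  appendixB_induction_claim_general pA pB qA qB hpA hpB hqA hqB h r s hr rk sk hrsum hssum l hl1 hl2
    al hal halr hals p hper hblocks bl hblper hbl
end

section
/- Let h ≥ 1 and let b_1, …, b_{2h} be real numbers with 0 < |b_k| < 1 for all k, extended periodically with period 2h. If at most one index k ∈ {1, …, 2h} satisfies b_k < 0, then Q = h + Σ_{m=1}^{2h} Σ_{j=1}^{2h−1} (−1)^j Π_{i=m}^{m+j−1} b_i + h Π_{i=1}^{2h} b_i is strictly positive. -/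
open Finset Function

/-!
Write the inner sum as the nested expression `T m = 1 - b m * (1 - b (m + 1) * (⋯))` of depth
`2h`. Since `2h` is even, the next term of the alternating sum is `+B`, the product over a full
period, so `T m + B = 1 - b m * T (m + 1)` and hence
`T m + T (m + 1) = (1 - B) + (1 - b m) * T (m + 1)`. Summing over consecutive pairs starting at
any index `a` turns `Q` into `∑ r < h, (1 - b (a + 2r)) * T (a + 2r + 1)`. Start right after the
negative entry: then in each window read by `T (a + 2r + 1)` the negative entry sits at an even
offset, and such a nested expression lies in `(0, 2)`.
-/

@[to_additive]
theorem Function.Periodic.prod_Ico_eq_prod_range {M : Type*} [CommMonoid M] {f : ℕ → M} {n : ℕ}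
    (hf : Periodic f n) (m : ℕ) : ∏ i ∈ Ico m (m + n), f i = ∏ i ∈ range n, f i := by
  induction m with
  | zero => rw [zero_add, range_eq_Ico]
  | succ m ih =>
    rcases n.eq_zero_or_pos with rfl | hn
    · simp
    rw [← ih, add_right_comm, prod_Ico_succ_top (by omega), hf,
      prod_eq_prod_Ico_succ_bot (by omega : m < m + n), mul_comm]

theorem Finset.sum_range_two_mul {M : Type*} [AddCommMonoid M] (f : ℕ → M) (n : ℕ) :
    ∑ i ∈ range (2 * n), f i = ∑ i ∈ range n, (f (2 * i) + f (2 * i + 1)) := by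
  induction n with
  | zero => simp
  | succ n ih => rw [mul_add_one, sum_range_succ, sum_range_succ, sum_range_succ, ih, add_assoc]

/-- `altNest b L m = 1 - b m * (1 - b (m + 1) * (⋯ (1 - b (m + L - 2) * 1)))`, with `L` ones. -/
noncomputable def altNest (b : ℕ → ℝ) : ℕ → ℕ → ℝ
  | 0, _ => 0
  | L + 1, m => 1 - b m * altNest b L (m + 1)

theorem altNest_eq_sum (b : ℕ → ℝ) (L m : ℕ) :
    altNest b L m = ∑ j ∈ range L, (-1 : ℝ) ^ j * ∏ i ∈ Ico m (m + j), b i := by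
  induction L generalizing m with
  | zero => simp [altNest]
  | succ L ih =>
    have hterm : ∀ j, (-1 : ℝ) ^ (j + 1) * ∏ i ∈ Ico m (m + (j + 1)), b i
        = -(b m * ((-1 : ℝ) ^ j * ∏ i ∈ Ico (m + 1) (m + 1 + j), b i)) := fun j => by
      rw [prod_eq_prod_Ico_succ_bot (by omega), show m + (j + 1) = m + 1 + j by omega]
      ring
    simp [altNest, ih, sum_range_succ', hterm, ← mul_sum]
    ring

theorem altNest_add_prod_of_even {n : ℕ} (hn : Even n) (b : ℕ → ℝ) (m : ℕ) :
    altNest b n m + ∏ i ∈ Ico m (m + n), b i = 1 - b m * altNest b n (m + 1) := by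
  have h := altNest_eq_sum b (n + 1) m
  rw [sum_range_succ, ← altNest_eq_sum, hn.neg_one_pow, one_mul] at h
  exact h.symm

theorem altNest_periodic {b : ℕ → ℝ} {n : ℕ} (hb : Periodic b n) (L : ℕ) :
    Periodic (altNest b L) n := by
  induction L with
  | zero => intro m; rfl
  | succ L ih => intro m; simp only [altNest, hb m, add_right_comm m n 1, ih (m + 1)]

theorem altNest_mem_Icc_of_mem_Ioo {b : ℕ → ℝ} {L m : ℕ}
    (hb : ∀ r < L, b (m + r) ∈ Set.Ioo 0 1) : altNest b L m ∈ Set.Icc 0 1 := by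
  induction L generalizing m with
  | zero => simp [altNest]
  | succ L ih =>
    obtain ⟨h0, h1⟩ := ih (m := m + 1) fun r hr => by
      rw [add_right_comm]; exact hb (r + 1) (by omega)
    obtain ⟨hbm0, hbm1⟩ : b m ∈ Set.Ioo 0 1 := hb 0 (by omega)
    constructor <;> simp only [altNest] <;> nlinarith

/-- Going two levels down multiplies the tail by `b m * b (m + 1) > 0` and adds `1 - b m > 0`;
at the even offset itself the tail lies in `[0, 1]`, so the sign of `b (m + t)` does not matter. -/
theorem altNest_mem_Ioo_of_even {b : ℕ → ℝ} {t L m : ℕ} (ht : Even t) (htL : t < L)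
    (hbt : b (m + t) ∈ Set.Ioo (-1) 1) (hb : ∀ r < L, r ≠ t → b (m + r) ∈ Set.Ioo 0 1) :
    altNest b L m ∈ Set.Ioo 0 2 := by
  obtain ⟨s, rfl⟩ := ht
  induction s generalizing L m with
  | zero =>
    obtain ⟨L, rfl⟩ : ∃ L', L = L' + 1 := ⟨L - 1, by omega⟩
    obtain ⟨h0, h1⟩ : altNest b L (m + 1) ∈ Set.Icc 0 1 := altNest_mem_Icc_of_mem_Ioo
      fun r hr => by rw [add_right_comm]; exact hb (r + 1) (by omega) (by omega)
    obtain ⟨hbm0, hbm1⟩ : b m ∈ Set.Ioo (-1) 1 := hbt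
    constructor <;> simp only [altNest] <;> nlinarith
  | succ s ih =>
    obtain ⟨L, rfl⟩ : ∃ L', L = L' + 2 := ⟨L - 2, by omega⟩
    obtain ⟨h0, h2⟩ : altNest b L (m + 2) ∈ Set.Ioo 0 2 :=
      ih (by omega) (by rwa [show m + 2 + (s + s) = m + (s + 1 + (s + 1)) by omega])
        fun r hr hrs => by rw [add_right_comm]; exact hb (r + 2) (by omega) (by omega)
    obtain ⟨hb00, hb01⟩ : b m ∈ Set.Ioo 0 1 := hb 0 (by omega) (by omega)
    obtain ⟨hb10, hb11⟩ : b (m + 1) ∈ Set.Ioo 0 1 := hb 1 (by omega) (by omega)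
    constructor <;> simp only [altNest] <;> nlinarith [mul_pos hb00 hb10, mul_pos hb00 h0]

theorem sum_neg_one_pow_mul_prod_eq_altNest_sub_one {n : ℕ} (hn : 1 ≤ n) (b : ℕ → ℝ)
    (m : ℕ) :
    ∑ j ∈ Icc 1 (n - 1), (-1 : ℝ) ^ j * ∏ i ∈ Icc m (m + j - 1), b i = altNest b n m - 1 := by
  rw [altNest_eq_sum, range_eq_Ico, sum_eq_sum_Ico_succ_bot (by omega)]
  simp only [pow_zero, add_zero, Ico_self, prod_empty, mul_one, add_sub_cancel_left]
  refine sum_congr (by ext; simp; omega) fun j hj => ?_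
  rw [show Icc m (m + j - 1) = Ico m (m + j) by ext; simp at hj ⊢; omega]

theorem sum_Icc_altNest_eq {b : ℕ → ℝ} {h : ℕ} (hb : Periodic b (2 * h)) (a : ℕ) :
    ∑ m ∈ Icc 1 (2 * h), altNest b (2 * h) m
      = h * (1 - ∏ i ∈ Icc 1 (2 * h), b i)
        + ∑ r ∈ range h, (1 - b (a + 2 * r)) * altNest b (2 * h) (a + 2 * r + 1) := by
  have hIcc : Icc 1 (2 * h) = Ico 1 (1 + 2 * h) := by ext; simp; omega
  have hprod : ∀ a, ∏ i ∈ Ico a (a + 2 * h), b i = ∏ i ∈ Icc 1 (2 * h), b i := fun a => by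
    rw [hIcc, hb.prod_Ico_eq_prod_range, hb.prod_Ico_eq_prod_range]
  have hpair : ∀ a, altNest b (2 * h) a + altNest b (2 * h) (a + 1)
      = (1 - ∏ i ∈ Icc 1 (2 * h), b i) + (1 - b a) * altNest b (2 * h) (a + 1) := fun a => by
    linarith [hprod a ▸ altNest_add_prod_of_even (even_two_mul h) b a]
  have hT := altNest_periodic hb (2 * h)
  calc ∑ m ∈ Icc 1 (2 * h), altNest b (2 * h) m
      = ∑ i ∈ range (2 * h), altNest b (2 * h) (a + i) := by
        rw [hIcc, hT.sum_Ico_eq_sum_range, ← hT.sum_Ico_eq_sum_range a, sum_Ico_eq_sum_range,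
          add_tsub_cancel_left]
    _ = ∑ r ∈ range h, (altNest b (2 * h) (a + 2 * r) + altNest b (2 * h) (a + 2 * r + 1)) := by
        rw [sum_range_two_mul]; rfl
    _ = _ := by simp only [hpair, sum_add_distrib, sum_const, card_range, nsmul_eq_mul]

theorem exists_forall_pos_of_card_neg_le_one {b : ℕ → ℝ} {n : ℕ} (hb : Periodic b n)
    (hb0 : ∀ k, b k ≠ 0) (hneg : ((Icc 1 n).filter fun k => b k < 0).card ≤ 1) :
    ∃ K, ∀ i, K < i → i < K + n → 0 < b i := by
  obtain ⟨K, hK⟩ := card_le_one_iff_subset_singleton.mp hneg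
  refine ⟨K, fun i hKi hiK => (hb0 i).lt_or_gt.resolve_left fun hbi => ?_⟩
  obtain ⟨q, j, hq, hij⟩ : ∃ q j, j = (i - 1) % n + 1 ∧ i = j + q * n :=
    ⟨(i - 1) / n, _, rfl, by have := Nat.mod_add_div' (i - 1) n; omega⟩
  have hbj : b i = b j := by rw [hij]; simpa using hb.nat_mul q j
  have hjK : j = K := mem_singleton.mp <| hK <| mem_filter.mpr
    ⟨mem_Icc.mpr ⟨by omega, hq ▸ Nat.mod_lt _ (by omega)⟩, hbj ▸ hbi⟩
  rcases q with _ | q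
  · omega
  · nlinarith

/-- Let `h ≥ 1` and `b_1, …, b_{2h}` be real numbers with `0 < |b_k| < 1`,
extended periodically with period `2h`. If at most one index `k ∈ {1,…,2h}`
satisfies `b_k < 0`, then
`Q = h + Σ_{m=1}^{2h} Σ_{j=1}^{2h−1} (−1)^j Π_{i=m}^{m+j−1} b_i + h Π_{i=1}^{2h} b_i`
is strictly positive. -/
theorem Q_pos_at_most_one_negative
    (h : ℕ) (hh : 1 ≤ h) (b : ℕ → ℝ)
    (hbper : ∀ i, b (i + 2 * h) = b i)
    (habs : ∀ k, 0 < |b k| ∧ |b k| < 1)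
    (hneg : ((Finset.Icc 1 (2 * h)).filter fun k => b k < 0).card ≤ 1) :
    0 < (h : ℝ)
        + (∑ m ∈ Finset.Icc 1 (2 * h), ∑ j ∈ Finset.Icc 1 (2 * h - 1),
            (-1 : ℝ) ^ j * ∏ i ∈ Finset.Icc m (m + j - 1), b i)
        + (h : ℝ) * ∏ i ∈ Finset.Icc 1 (2 * h), b i := by
  have hb0 : ∀ k, b k ≠ 0 := fun k => abs_pos.mp (habs k).1
  have hb1 : ∀ k, b k ∈ Set.Ioo (-1) 1 := fun k => abs_lt.mp (habs k).2
  obtain ⟨K, hK⟩ := exists_forall_pos_of_card_neg_le_one hbper hb0 hneg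
  have hpos : ∀ i, K < i → i < K + 4 * h → i ≠ K + 2 * h → 0 < b i := fun i hKi hiK hne => by
    rcases hne.lt_or_gt with hi | hi
    · exact hK i hKi hi
    · rw [show i = i - 2 * h + 2 * h by omega, hbper]
      exact hK _ (by omega) (by omega)
  rw [sum_congr rfl fun m _ => sum_neg_one_pow_mul_prod_eq_altNest_sub_one (by omega) b m,
    sum_sub_distrib, sum_Icc_altNest_eq hbper (K + 1)]
  suffices 0 < ∑ r ∈ range h, (1 - b (K + 1 + 2 * r)) * altNest b (2 * h) (K + 1 + 2 * r + 1) by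
    simp only [sum_const, Nat.card_Icc, Nat.add_sub_cancel, nsmul_eq_mul, mul_one]
    push_cast
    linarith
  refine sum_pos (fun r hr => mul_pos (by linarith [(hb1 (K + 1 + 2 * r)).2]) ?_)
    (nonempty_range_iff.mpr (by omega))
  have hr : r < h := mem_range.mp hr
  -- `b K = b (K + 2h)` sits at the even offset `2h - 2r - 2` of the window read here.
  refine (altNest_mem_Ioo_of_even (t := 2 * h - 2 * r - 2) ⟨h - r - 1, by omega⟩ (by omega)
    ?_ fun r' hr' hne => ⟨hpos _ (by omega) (by omega) (by omega), (hb1 _).2⟩).1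
  rw [show K + 1 + 2 * r + 1 + (2 * h - 2 * r - 2) = K + 2 * h by omega, hbper]
  exact hb1 K
end
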